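/- Let σ_1,…,σ_m be independent Rademacher variables, G ∈ ℝ^{m×c} with |G_{ij}| ≤ Λ_Q, and ψ_1,…,ψ_m in a Hilbert space with ‖ψ_i‖ ≤ Λ_W. Then E_σ sup_{α ∈ Δ} ‖(1/m)·Σ_{i=1}^m σ_i (Gα)_i ψ_i‖ ≤ Λ_Q·Λ_W·√c/√m, where Δ = {α ∈ ℝ^c : α ≥ 0, Σ_j α_j = 1}. -/

import Mathlib

/-!
For `α` in the simplex, `∑ i, σ i (G α) i • ψ i = ∑ j, α j • v j` with
`v j = ∑ i, σ i • G i j • ψ i`, so its norm is at most `maxⱼ ‖v j‖ ≤ (∑ j, ‖v j‖²)^{1/2}`,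
uniformly in `α`. Rademacher signs are orthonormal in `L²`, hence `E ‖v j‖² = ∑ i, ‖G i j • ψ i‖²`,
and Jensen's inequality for the square root gives
`E sup ≤ m⁻¹ (∑ j, ∑ i, ‖G i j • ψ i‖²)^{1/2} ≤ m⁻¹ Λ_Q Λ_W √(c m)`.
-/

open MeasureTheory ProbabilityTheory Finset Set

theorem MeasureTheory.Integrable.sqrt {α : Type*} [MeasurableSpace α] {μ : Measure α}
    [IsFiniteMeasure μ] {f : α → ℝ} (hf : Integrable f μ) :
    Integrable (fun x => √(f x)) μ := by
  refine .mono' (hf.abs.add (integrable_const 1))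
    (Real.continuous_sqrt.comp_aestronglyMeasurable hf.1) (ae_of_all _ fun x => ?_)
  rw [Real.norm_of_nonneg (Real.sqrt_nonneg _), Pi.add_apply,
    Real.sqrt_le_left (by positivity)]
  nlinarith [abs_nonneg (f x), le_abs_self (f x)]

theorem integral_sqrt_le_sqrt_integral {α : Type*} [MeasurableSpace α] {μ : Measure α}
    [IsProbabilityMeasure μ] {f : α → ℝ} (hf : Integrable f μ) (hf0 : 0 ≤ᵐ[μ] f) :
    ∫ x, √(f x) ∂μ ≤ √(∫ x, f x ∂μ) :=
  Real.strictConcaveOn_sqrt.concaveOn.le_map_integral Real.continuous_sqrt.continuousOn isClosed_Ici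
    hf0 hf hf.sqrt

theorem norm_sum_smul_le_sqrt_sum_norm_sq {κ E : Type*} [Fintype κ] [SeminormedAddCommGroup E]
    [NormedSpace ℝ E] {α : κ → ℝ} (hα : α ∈ stdSimplex ℝ κ) (v : κ → E) :
    ‖∑ j, α j • v j‖ ≤ √(∑ j, ‖v j‖ ^ 2) := by
  have hv : ∀ j, ‖v j‖ ≤ √(∑ j, ‖v j‖ ^ 2) := fun j =>
    Real.le_sqrt_of_sq_le (Finset.single_le_sum (fun k _ => sq_nonneg ‖v k‖) (Finset.mem_univ j))
  calc ‖∑ j, α j • v j‖ ≤ ∑ j, α j * ‖v j‖ := by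
        refine (norm_sum_le _ _).trans_eq (Finset.sum_congr rfl fun j _ => ?_)
        rw [norm_smul, Real.norm_of_nonneg (hα.1 j)]
    _ ≤ ∑ j, α j * √(∑ j, ‖v j‖ ^ 2) := by gcongr with j; exacts [hα.1 j, hv j]
    _ = √(∑ j, ‖v j‖ ^ 2) := by rw [← Finset.sum_mul, hα.2, one_mul]

theorem sum_mul_mulVec_smul_eq {ι κ M : Type*} [Fintype ι] [Fintype κ] [AddCommGroup M]
    [Module ℝ M] (s : ι → ℝ) (G : Matrix ι κ ℝ) (α : κ → ℝ) (ψ : ι → M) :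
    ∑ i, (s i * G.mulVec α i) • ψ i = ∑ j, α j • ∑ i, s i • G i j • ψ i := by
  simp only [Matrix.mulVec, dotProduct, Finset.mul_sum, Finset.sum_smul, Finset.smul_sum,
    smul_smul]
  rw [Finset.sum_comm]
  exact Finset.sum_congr rfl fun j _ => Finset.sum_congr rfl fun i _ => by ring_nf

theorem sqrt_sum_sum_norm_sq_le {κ ι E : Type*} [Fintype κ] [Fintype ι]
    [SeminormedAddCommGroup E] {u : κ → ι → E} {M : ℝ} (hu : ∀ j i, ‖u j i‖ ≤ M) :
    √(∑ j, ∑ i, ‖u j i‖ ^ 2) ≤ M * √(Fintype.card κ * Fintype.card ι) := by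
  rcases isEmpty_or_nonempty (κ × ι) with hempty | ⟨j, i⟩
  · rcases isEmpty_prod.1 hempty with h | h <;> simp
  have hM : 0 ≤ M := (norm_nonneg _).trans (hu j i)
  rw [← Real.sqrt_sq hM, ← Real.sqrt_mul (sq_nonneg M)]
  refine Real.sqrt_le_sqrt ?_
  calc ∑ j, ∑ i, ‖u j i‖ ^ 2 ≤ ∑ j : κ, ∑ i : ι, M ^ 2 := by
        gcongr with j _ i; exact hu j i
    _ = M ^ 2 * (Fintype.card κ * Fintype.card ι) := by simp; ring

section Rademacher

variable {Ω : Type*} [MeasurableSpace Ω] {μ : Measure Ω}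

def IsRademacher (s : Ω → ℝ) (μ : Measure Ω) : Prop :=
  μ {ω | s ω = 1} = 1 / 2 ∧ μ {ω | s ω = -1} = 1 / 2

namespace IsRademacher

variable [IsProbabilityMeasure μ] {s : Ω → ℝ}

theorem ae_eq_one_or_neg_one (hs : IsRademacher s μ) (hsm : Measurable s) :
    ∀ᵐ ω ∂μ, s ω = 1 ∨ s ω = -1 := by
  have hA : MeasurableSet {ω | s ω = 1} := hsm (measurableSet_singleton 1)
  have hB : MeasurableSet {ω | s ω = -1} := hsm (measurableSet_singleton (-1))
  have hdisj : Disjoint {ω | s ω = 1} {ω | s ω = -1} :=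
    Set.disjoint_left.2 fun ω (h1 : s ω = 1) (h2 : s ω = -1) => by norm_num [h1] at h2
  change {ω | s ω = 1} ∪ {ω | s ω = -1} ∈ ae μ
  rw [mem_ae_iff, prob_compl_eq_zero_iff (hA.union hB), measure_union hdisj hB, hs.1, hs.2,
    ENNReal.add_halves]

theorem ae_abs_le_one (hs : IsRademacher s μ) (hsm : Measurable s) : ∀ᵐ ω ∂μ, |s ω| ≤ 1 := by
  filter_upwards [hs.ae_eq_one_or_neg_one hsm] with ω hω
  rcases hω with h | h <;> simp [h]

theorem integrable (hs : IsRademacher s μ) (hsm : Measurable s) : Integrable s μ :=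
  .of_bound hsm.aestronglyMeasurable 1 (hs.ae_abs_le_one hsm)

theorem integral_eq_zero (hs : IsRademacher s μ) (hsm : Measurable s) : ∫ ω, s ω ∂μ = 0 := by
  have hA : MeasurableSet {ω | s ω = 1} := hsm (measurableSet_singleton 1)
  have hB : MeasurableSet {ω | s ω = -1} := hsm (measurableSet_singleton (-1))
  have hs_eq : s =ᵐ[μ] fun ω => {ω | s ω = 1}.indicator 1 ω - {ω | s ω = -1}.indicator 1 ω := by
    filter_upwards [hs.ae_eq_one_or_neg_one hsm] with ω hω
    rcases hω with h | h <;> norm_num [Set.indicator_apply, h]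
  rw [integral_congr_ae hs_eq, integral_sub ((integrable_const 1).indicator hA)
    ((integrable_const 1).indicator hB), integral_indicator_one hA, integral_indicator_one hB,
    measureReal_def, measureReal_def, hs.1, hs.2, sub_self]

theorem integral_mul_self (hs : IsRademacher s μ) (hsm : Measurable s) :
    ∫ ω, s ω * s ω ∂μ = 1 := by
  have hsq : (fun ω => s ω * s ω) =ᵐ[μ] fun _ => 1 := by
    filter_upwards [hs.ae_eq_one_or_neg_one hsm] with ω hω
    rcases hω with h | h <;> simp [h]
  simp [integral_congr_ae hsq]

end IsRademacher

variable [IsProbabilityMeasure μ] {ι : Type*} {σ : ι → Ω → ℝ}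

theorem integral_mul_rademacher_eq_ite [DecidableEq ι] (hmeas : ∀ i, Measurable (σ i))
    (hrad : ∀ i, IsRademacher (σ i) μ) (hindep : Pairwise fun i k => IndepFun (σ i) (σ k) μ)
    (i k : ι) : ∫ ω, σ i ω * σ k ω ∂μ = if i = k then 1 else 0 := by
  split_ifs with hik
  · subst hik
    exact (hrad i).integral_mul_self (hmeas i)
  · rw [(hindep hik).integral_fun_mul_eq_mul_integral (hmeas i).aestronglyMeasurable
      (hmeas k).aestronglyMeasurable, (hrad i).integral_eq_zero (hmeas i), zero_mul]

variable [Fintype ι] {E : Type*} [NormedAddCommGroup E] [NormedSpace ℝ E]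

theorem ae_norm_sum_rademacher_smul_le (hmeas : ∀ i, Measurable (σ i))
    (hrad : ∀ i, IsRademacher (σ i) μ) (x : ι → E) :
    ∀ᵐ ω ∂μ, ‖∑ i, σ i ω • x i‖ ≤ ∑ i, ‖x i‖ := by
  filter_upwards [ae_all_iff.2 fun i => (hrad i).ae_abs_le_one (hmeas i)] with ω hω
  refine (norm_sum_le _ _).trans (Finset.sum_le_sum fun i _ => ?_)
  rw [norm_smul, Real.norm_eq_abs]
  exact mul_le_of_le_one_left (norm_nonneg _) (hω i)

theorem integrable_norm_sum_rademacher_smul_sq (hmeas : ∀ i, Measurable (σ i))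
    (hrad : ∀ i, IsRademacher (σ i) μ) (x : ι → E) :
    Integrable (fun ω => ‖∑ i, σ i ω • x i‖ ^ 2) μ := by
  have hmeas_sum : AEStronglyMeasurable (fun ω => ∑ i, σ i ω • x i) μ :=
    Finset.aestronglyMeasurable_fun_sum _ fun i _ =>
      (hmeas i).aestronglyMeasurable.smul_const (x i)
  refine .of_bound (hmeas_sum.norm.pow 2) ((∑ i, ‖x i‖) ^ 2) ?_
  filter_upwards [ae_norm_sum_rademacher_smul_le hmeas hrad x] with ω hω
  rw [Real.norm_eq_abs, abs_of_nonneg (by positivity)]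
  exact pow_le_pow_left₀ (norm_nonneg _) hω 2

theorem integral_norm_sum_rademacher_smul_sq {H : Type*} [NormedAddCommGroup H]
    [InnerProductSpace ℝ H] (hmeas : ∀ i, Measurable (σ i))
    (hrad : ∀ i, IsRademacher (σ i) μ) (hindep : Pairwise fun i k => IndepFun (σ i) (σ k) μ)
    (x : ι → H) : ∫ ω, ‖∑ i, σ i ω • x i‖ ^ 2 ∂μ = ∑ i, ‖x i‖ ^ 2 := by
  classical
  have hexpand : ∀ ω, ‖∑ i, σ i ω • x i‖ ^ 2
      = ∑ i, ∑ k, (σ i ω * σ k ω) * inner ℝ (x i) (x k) := fun ω => by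
    simp only [← real_inner_self_eq_norm_sq, sum_inner, inner_sum, real_inner_smul_left,
      real_inner_smul_right, mul_assoc]
    exact Finset.sum_congr rfl fun i _ => Finset.sum_congr rfl fun k _ => by rw [real_inner_comm]
  have hint : ∀ i k, Integrable (fun ω => σ i ω * σ k ω * inner ℝ (x i) (x k)) μ := fun i k =>
    (((hrad k).integrable (hmeas k)).bdd_mul ((hmeas i).aestronglyMeasurable)
      ((hrad i).ae_abs_le_one (hmeas i))).mul_const _
  simp_rw [hexpand]
  rw [integral_finsetSum _ fun i _ => integrable_finsetSum _ fun k _ => hint i k]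
  simp_rw [integral_finsetSum _ fun k _ => hint _ k, integral_mul_const,
    integral_mul_rademacher_eq_ite hmeas hrad hindep, ite_mul, one_mul, zero_mul,
    Finset.sum_ite_eq, Finset.mem_univ, if_true, real_inner_self_eq_norm_sq]

theorem integral_sqrt_sum_norm_sum_rademacher_smul_sq_le {κ H : Type*} [Fintype κ]
    [NormedAddCommGroup H] [InnerProductSpace ℝ H] (hmeas : ∀ i, Measurable (σ i))
    (hrad : ∀ i, IsRademacher (σ i) μ) (hindep : Pairwise fun i k => IndepFun (σ i) (σ k) μ)
    (u : κ → ι → H) :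
    ∫ ω, √(∑ j, ‖∑ i, σ i ω • u j i‖ ^ 2) ∂μ ≤ √(∑ j, ∑ i, ‖u j i‖ ^ 2) := by
  have hint : ∀ j, Integrable (fun ω => ‖∑ i, σ i ω • u j i‖ ^ 2) μ := fun j =>
    integrable_norm_sum_rademacher_smul_sq hmeas hrad (u j)
  calc ∫ ω, √(∑ j, ‖∑ i, σ i ω • u j i‖ ^ 2) ∂μ
      ≤ √(∫ ω, ∑ j, ‖∑ i, σ i ω • u j i‖ ^ 2 ∂μ) :=
        integral_sqrt_le_sqrt_integral (integrable_finsetSum _ fun j _ => hint j)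
          (ae_of_all _ fun ω => by positivity)
    _ = √(∑ j, ∑ i, ‖u j i‖ ^ 2) := by
        rw [integral_finsetSum _ fun j _ => hint j]
        simp_rw [integral_norm_sum_rademacher_smul_sq hmeas hrad hindep]

end Rademacher

theorem stmt10_general {Ω H : Type*} [MeasurableSpace Ω] [NormedAddCommGroup H]
    [InnerProductSpace ℝ H]
    (μ : Measure Ω) [IsProbabilityMeasure μ]
    (m c : ℕ) (σ : Fin m → Ω → ℝ) (hmeas : ∀ i, Measurable (σ i))
    (hindep : iIndepFun (m := fun _ => Real.measurableSpace) σ μ)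
    (hrad : ∀ i, μ {ω | σ i ω = 1} = 1/2 ∧ μ {ω | σ i ω = -1} = 1/2)
    (G : Matrix (Fin m) (Fin c) ℝ) (ΛQ ΛW : ℝ)
    (hG : ∀ i j, |G i j| ≤ ΛQ) (ψ : Fin m → H) (hψ : ∀ i, ‖ψ i‖ ≤ ΛW) :
    (∫ ω, sSup ((fun α : Fin c → ℝ =>
        ‖(m : ℝ)⁻¹ • ∑ i, (σ i ω * G.mulVec α i) • ψ i‖) '' stdSimplex ℝ (Fin c)) ∂μ)
      ≤ ΛQ * ΛW * Real.sqrt c / Real.sqrt m := by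
  set u : Fin c → Fin m → H := fun j i => G i j • ψ i
  set Q : Ω → ℝ := fun ω => ∑ j, ‖∑ i, σ i ω • u j i‖ ^ 2
  have hsup : ∀ ω, sSup ((fun α : Fin c → ℝ =>
      ‖(m : ℝ)⁻¹ • ∑ i, (σ i ω * G.mulVec α i) • ψ i‖) '' stdSimplex ℝ (Fin c))
        ≤ (m : ℝ)⁻¹ * √(Q ω) := fun ω => by
    refine Real.sSup_le ?_ (by positivity)
    rintro _ ⟨α, hα, rfl⟩
    dsimp only
    rw [sum_mul_mulVec_smul_eq, norm_smul, norm_inv, Real.norm_natCast]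
    exact mul_le_mul_of_nonneg_left (norm_sum_smul_le_sqrt_sum_norm_sq hα _) (by positivity)
  have hQ : Integrable Q μ :=
    integrable_finsetSum _ fun j _ => integrable_norm_sum_rademacher_smul_sq hmeas hrad (u j)
  have hu : ∀ j i, ‖u j i‖ ≤ ΛQ * ΛW := fun j i =>
    (norm_smul _ _).trans_le (mul_le_mul (hG i j) (hψ i) (norm_nonneg _)
      ((abs_nonneg _).trans (hG i j)))
  calc (∫ ω, sSup _ ∂μ) ≤ ∫ ω, (m : ℝ)⁻¹ * √(Q ω) ∂μ :=
        integral_mono_of_nonneg (ae_of_all _ fun ω => Real.sSup_nonneg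
          (by rintro _ ⟨α, _, rfl⟩; exact norm_nonneg _)) (hQ.sqrt.const_mul _) (ae_of_all _ hsup)
    _ = (m : ℝ)⁻¹ * ∫ ω, √(Q ω) ∂μ := integral_const_mul _ _
    _ ≤ (m : ℝ)⁻¹ * √(∑ j, ∑ i, ‖u j i‖ ^ 2) := by
        gcongr
        exact integral_sqrt_sum_norm_sum_rademacher_smul_sq_le hmeas hrad
          (fun i k hik => hindep.indepFun hik) u
    _ ≤ (m : ℝ)⁻¹ * (ΛQ * ΛW * √(c * m)) := by
        gcongr
        simpa using sqrt_sum_sum_norm_sq_le hu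
    _ = ΛQ * ΛW * √c / √m := by
        rw [Real.sqrt_mul (Nat.cast_nonneg _), div_eq_mul_inv, ← Real.sqrt_div_self]
        ring

/-- Rademacher complexity bound over the probability simplex (Lemma 2 step):
E_σ sup_{α∈Δ} ‖(1/m) Σ σ_i (Gα)_i ψ_i‖ ≤ Λ_Q Λ_W √c / √m. -/
theorem stmt10 {Ω H : Type*} [MeasurableSpace Ω] [NormedAddCommGroup H]
    [InnerProductSpace ℝ H]
    (μ : Measure Ω) [IsProbabilityMeasure μ]
    (m c : ℕ) (hm : 1 ≤ m) (σ : Fin m → Ω → ℝ) (hmeas : ∀ i, Measurable (σ i))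
    (hindep : iIndepFun (m := fun _ => Real.measurableSpace) σ μ)
    (hrad : ∀ i, μ {ω | σ i ω = 1} = 1/2 ∧ μ {ω | σ i ω = -1} = 1/2)
    (G : Matrix (Fin m) (Fin c) ℝ) (ΛQ ΛW : ℝ)
    (hG : ∀ i j, |G i j| ≤ ΛQ) (ψ : Fin m → H) (hψ : ∀ i, ‖ψ i‖ ≤ ΛW) :
    (∫ ω, sSup ((fun α : Fin c → ℝ =>
        ‖(m : ℝ)⁻¹ • ∑ i, (σ i ω * G.mulVec α i) • ψ i‖) '' stdSimplex ℝ (Fin c)) ∂μ)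
      ≤ ΛQ * ΛW * Real.sqrt c / Real.sqrt m :=
  stmt10_general μ m c σ hmeas hindep hrad G ΛQ ΛW hG ψ hψ
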